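/- For every θ = (θ₀,θ₁,θ₂) ∈ ℝ³ with θ₀ > √(θ₁²+θ₂²), setting |θ| = √(θ₀²−θ₁²−θ₂²), one has ∫_{ℝ²} exp(−(θ₀√(1+x₁²+x₂²) − θ₁x₁ − θ₂x₂)) / √(1+x₁²+x₂²) dx₁ dx₂ = 2π e^{−|θ|} / |θ|. (Equivalently, the 2D hyperboloid density integrates to 1.) -/

import Mathlib

/-!
On the hyperboloid `t² - |x|² = 1`, `t = √(1 + |x|²)`, the measure `dx / t` is Lorentz invariant,
so a boost turns the exponent `θ₀ t - θ₁ x₁ - θ₂ x₂` into `|θ| t` without changing the integral.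
The boost is performed as two boosts along the coordinate axes; each acts fibrewise (Tonelli)
through the change of variables `v ↦ a v + b √(c + v²)`, which preserves `dv / √(c + v²)`.
The remaining radial integral is computed in polar coordinates:
`∫₀^∞ r e^{-T √(1 + r²)} / √(1 + r²) dr = e^{-T} / T`.
Working with lower Lebesgue integrals gives Tonelli without integrability estimates; the finite
value then identifies the Bochner integral.
-/

open MeasureTheory Real Set Filter Topology Function
open scoped ENNReal

lemma hasDerivAt_sqrt_add_sq {c : ℝ} (hc : 0 < c) (v : ℝ) :
    HasDerivAt (fun v => √(c + v ^ 2)) (v / √(c + v ^ 2)) v := by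
  refine (((hasDerivAt_pow 2 v).const_add c).sqrt (by positivity)).congr_deriv ?_
  field_simp
  ring

section HyperbolaBoost

variable {a b c : ℝ}

/-- The boost `(t, v) ↦ (a t + b v, b t + a v)`, `a² - b² = 1`, read off in the coordinate `v`
on the branch `t = √(c + v²)` of the hyperbola `t² - v² = c`. -/
noncomputable def hyperbolaBoost (a b c v : ℝ) : ℝ := a * v + b * √(c + v ^ 2)

lemma mul_sqrt_add_sq_add_mul_pos (hc : 0 < c) (ha : 0 < a) (hab : a ^ 2 - b ^ 2 = 1)
    (v : ℝ) : 0 < a * √(c + v ^ 2) + b * v := by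
  have hσ : √(c + v ^ 2) ^ 2 = c + v ^ 2 := sq_sqrt (by positivity)
  have : (b * v) ^ 2 < (a * √(c + v ^ 2)) ^ 2 := by
    nlinarith [mul_pos hc (show 0 < a ^ 2 by positivity), sq_nonneg (a * v), sq_nonneg (b * v)]
  linarith [(abs_lt_of_sq_lt_sq' this (by positivity)).1]

lemma sqrt_add_sq_hyperbolaBoost (hc : 0 < c) (ha : 0 < a) (hab : a ^ 2 - b ^ 2 = 1) (v : ℝ) :
    √(c + hyperbolaBoost a b c v ^ 2) = a * √(c + v ^ 2) + b * v := by
  have hσ : √(c + v ^ 2) ^ 2 = c + v ^ 2 := sq_sqrt (by positivity)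
  rw [sqrt_eq_iff_eq_sq (by positivity) (mul_sqrt_add_sq_add_mul_pos hc ha hab v).le,
    hyperbolaBoost]
  linear_combination (-c) * hab - (a ^ 2 - b ^ 2) * hσ

lemma hyperbolaBoost_neg_hyperbolaBoost (hc : 0 < c) (ha : 0 < a) (hab : a ^ 2 - b ^ 2 = 1)
    (v : ℝ) : hyperbolaBoost a (-b) c (hyperbolaBoost a b c v) = v := by
  rw [hyperbolaBoost, sqrt_add_sq_hyperbolaBoost hc ha hab, hyperbolaBoost]
  linear_combination v * hab

lemma hasDerivAt_hyperbolaBoost (hc : 0 < c) (ha : 0 < a) (hab : a ^ 2 - b ^ 2 = 1) (v : ℝ) :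
    HasDerivAt (hyperbolaBoost a b c)
      (√(c + hyperbolaBoost a b c v ^ 2) / √(c + v ^ 2)) v := by
  refine (((hasDerivAt_id v).const_mul a).add
    ((hasDerivAt_sqrt_add_sq hc v).const_mul b)).congr_deriv ?_
  rw [sqrt_add_sq_hyperbolaBoost hc ha hab]
  field_simp

theorem lintegral_comp_hyperbolaBoost (hc : 0 < c) (ha : 0 < a) (hab : a ^ 2 - b ^ 2 = 1)
    (g : ℝ → ℝ≥0∞) :
    ∫⁻ v, ENNReal.ofReal (√(c + v ^ 2))⁻¹ * g (a * √(c + v ^ 2) - b * v) =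
      ∫⁻ v, ENNReal.ofReal (√(c + v ^ 2))⁻¹ * g (√(c + v ^ 2)) := by
  have hab' : a ^ 2 - (-b) ^ 2 = 1 := by rwa [neg_sq]
  have hinj : LeftInverse (hyperbolaBoost a (-b) c) (hyperbolaBoost a b c) :=
    hyperbolaBoost_neg_hyperbolaBoost hc ha hab
  have hsurj : range (hyperbolaBoost a b c) = univ := range_eq_univ.2 fun w =>
    ⟨_, by simpa using hyperbolaBoost_neg_hyperbolaBoost hc ha hab' w⟩
  have hcov := lintegral_image_eq_lintegral_abs_deriv_mul MeasurableSet.univ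
    (fun v _ => (hasDerivAt_hyperbolaBoost hc ha hab v).hasDerivWithinAt) hinj.injective.injOn
    fun w => ENNReal.ofReal (√(c + w ^ 2))⁻¹ * g (a * √(c + w ^ 2) - b * w)
  rw [image_univ, hsurj, Measure.restrict_univ] at hcov
  rw [hcov]
  refine lintegral_congr fun v => ?_
  have hσ : 0 < √(c + v ^ 2) := by positivity
  have hσ' := mul_sqrt_add_sq_add_mul_pos hc ha hab v
  rw [sqrt_add_sq_hyperbolaBoost hc ha hab, ← mul_assoc, ← ENNReal.ofReal_mul (by positivity),
    abs_of_pos (div_pos hσ' hσ)]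
  congr 2
  · rw [div_mul_eq_mul_div, mul_inv_cancel₀ hσ'.ne', one_div]
  · rw [hyperbolaBoost]
    linear_combination √(c + v ^ 2) * hab

end HyperbolaBoost

lemma lintegral_Ioi_ofReal_mul_exp_neg_mul_sqrt_one_add_sq {T : ℝ} (hT : 0 < T) :
    ∫⁻ r in Ioi 0, ENNReal.ofReal (r * exp (-(T * √(1 + r ^ 2))) / √(1 + r ^ 2)) =
      ENNReal.ofReal (exp (-T) / T) := by
  set F : ℝ → ℝ := fun r => -exp (-(T * √(1 + r ^ 2))) / T
  have hF : ∀ r ∈ Ici (0 : ℝ),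
      HasDerivAt F (r * exp (-(T * √(1 + r ^ 2))) / √(1 + r ^ 2)) r := by
    intro r _
    refine ((((hasDerivAt_sqrt_add_sq one_pos r).const_mul T).neg.exp).neg.div_const T
      ).congr_deriv ?_
    simp only [Pi.neg_apply]
    field_simp
  have hF' : ∀ r ∈ Ioi (0 : ℝ), 0 ≤ r * exp (-(T * √(1 + r ^ 2))) / √(1 + r ^ 2) := by
    intro r (hr : 0 < r)
    positivity
  have hlim : Tendsto F atTop (𝓝 0) := by
    have hσ : Tendsto (fun r : ℝ => √(1 + r ^ 2)) atTop atTop :=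
      tendsto_sqrt_atTop.comp (tendsto_atTop_add_const_left _ 1 (tendsto_pow_atTop two_ne_zero))
    simpa [F] using (tendsto_exp_neg_atTop_nhds_zero.comp (hσ.const_mul_atTop hT)).neg.div_const T
  rw [← ofReal_integral_eq_lintegral_ofReal (integrableOn_Ioi_deriv_of_nonneg' hF hF' hlim)
    ((ae_restrict_iff' measurableSet_Ioi).2 (ae_of_all _ hF')),
    integral_Ioi_of_hasDerivAt_of_nonneg' hF hF' hlim]
  simp [F, neg_div]

noncomputable def hyperboloidKernel (θ₀ θ₁ θ₂ : ℝ) (x : ℝ × ℝ) : ℝ :=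
  exp (-(θ₀ * √(1 + x.1 ^ 2 + x.2 ^ 2) - θ₁ * x.1 - θ₂ * x.2)) / √(1 + x.1 ^ 2 + x.2 ^ 2)

lemma hyperboloidKernel_nonneg (θ₀ θ₁ θ₂ : ℝ) (x : ℝ × ℝ) :
    0 ≤ hyperboloidKernel θ₀ θ₁ θ₂ x := by
  unfold hyperboloidKernel
  positivity

lemma continuous_hyperboloidKernel (θ₀ θ₁ θ₂ : ℝ) : Continuous (hyperboloidKernel θ₀ θ₁ θ₂) := by
  unfold hyperboloidKernel
  exact Continuous.div (by fun_prop) (by fun_prop) fun x => by positivity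

lemma measurable_ofReal_hyperboloidKernel (θ₀ θ₁ θ₂ : ℝ) :
    Measurable fun x => ENNReal.ofReal (hyperboloidKernel θ₀ θ₁ θ₂ x) :=
  (continuous_hyperboloidKernel θ₀ θ₁ θ₂).measurable.ennreal_ofReal

lemma hyperboloidKernel_swap (θ₀ θ₁ θ₂ : ℝ) (x : ℝ × ℝ) :
    hyperboloidKernel θ₀ θ₁ θ₂ x.swap = hyperboloidKernel θ₀ θ₂ θ₁ x := by
  simp only [hyperboloidKernel, Prod.fst_swap, Prod.snd_swap, add_right_comm _ (x.2 ^ 2)]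
  ring_nf

lemma lintegral_hyperboloidKernel_swap (θ₀ θ₁ θ₂ : ℝ) :
    ∫⁻ x, ENNReal.ofReal (hyperboloidKernel θ₀ θ₁ θ₂ x) =
      ∫⁻ x, ENNReal.ofReal (hyperboloidKernel θ₀ θ₂ θ₁ x) := by
  rw [Measure.volume_eq_prod, ← lintegral_prod_swap]
  simp only [hyperboloidKernel_swap]

lemma lintegral_hyperboloidKernel_boost {θ₀ θ₂ : ℝ} (θ₁ : ℝ) (h : |θ₂| < θ₀) :
    ∫⁻ x, ENNReal.ofReal (hyperboloidKernel θ₀ θ₁ θ₂ x) =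
      ∫⁻ x, ENNReal.ofReal (hyperboloidKernel √(θ₀ ^ 2 - θ₂ ^ 2) θ₁ 0 x) := by
  have hθ : θ₂ ^ 2 < θ₀ ^ 2 := sq_lt_sq' (neg_lt_of_abs_lt h) (lt_of_abs_lt h)
  set T := √(θ₀ ^ 2 - θ₂ ^ 2)
  have hT : 0 < T := sqrt_pos.2 (by linarith)
  have hT2 : T ^ 2 = θ₀ ^ 2 - θ₂ ^ 2 := sq_sqrt (by linarith)
  rw [Measure.volume_eq_prod,
    lintegral_prod _ (measurable_ofReal_hyperboloidKernel _ _ _).aemeasurable,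
    lintegral_prod _ (measurable_ofReal_hyperboloidKernel _ _ _).aemeasurable]
  refine lintegral_congr fun x₁ => ?_
  have hboost := lintegral_comp_hyperbolaBoost (c := 1 + x₁ ^ 2) (a := θ₀ / T) (b := θ₂ / T)
    (by positivity) (div_pos (abs_nonneg θ₂ |>.trans_lt h) hT) (by field_simp; linarith)
    fun t => ENNReal.ofReal (exp (-(T * t - θ₁ * x₁)))
  refine (lintegral_congr fun v => ?_).trans (hboost.trans (lintegral_congr fun v => ?_)) <;>
  · rw [← ENNReal.ofReal_mul (by positivity), hyperboloidKernel]
    congr 1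
    field_simp
    ring_nf

lemma hyperboloidKernel_zero_zero_polarCoord_symm (T : ℝ) (p : ℝ × ℝ) :
    hyperboloidKernel T 0 0 (polarCoord.symm p) =
      exp (-(T * √(1 + p.1 ^ 2))) / √(1 + p.1 ^ 2) := by
  have hr : (p.1 * cos p.2) ^ 2 + (p.1 * sin p.2) ^ 2 = p.1 ^ 2 := by
    linear_combination p.1 ^ 2 * cos_sq_add_sin_sq p.2
  simp only [hyperboloidKernel, polarCoord_symm_apply, add_assoc, hr, zero_mul, sub_zero]

lemma lintegral_hyperboloidKernel_zero_zero {T : ℝ} (hT : 0 < T) :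
    ∫⁻ x, ENNReal.ofReal (hyperboloidKernel T 0 0 x) = ENNReal.ofReal (2 * π * exp (-T) / T) := by
  rw [← lintegral_comp_polarCoord_symm]
  simp only [hyperboloidKernel_zero_zero_polarCoord_symm, smul_eq_mul]
  rw [show polarCoord.target = Ioi (0 : ℝ) ×ˢ Ioo (-π) π from rfl, Measure.volume_eq_prod,
    ← Measure.prod_restrict, lintegral_prod _ (Measurable.aemeasurable (by fun_prop))]
  simp only [lintegral_const, Measure.restrict_apply_univ, Real.volume_Ioo]
  rw [lintegral_mul_const _ (by fun_prop),
    setLIntegral_congr_fun measurableSet_Ioi fun r (hr : 0 < r) => by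
      rw [← ENNReal.ofReal_mul hr.le, ← mul_div_assoc],
    lintegral_Ioi_ofReal_mul_exp_neg_mul_sqrt_one_add_sq hT, ← ENNReal.ofReal_mul (by positivity)]
  congr 1
  ring

theorem hyperboloid2_normalization (θ₀ θ₁ θ₂ : ℝ)
    (hθ : Real.sqrt (θ₁ ^ 2 + θ₂ ^ 2) < θ₀) :
    ∫ x : ℝ × ℝ,
        Real.exp (-(θ₀ * Real.sqrt (1 + x.1 ^ 2 + x.2 ^ 2) - θ₁ * x.1 - θ₂ * x.2)) /
          Real.sqrt (1 + x.1 ^ 2 + x.2 ^ 2) =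
      2 * Real.pi * Real.exp (-Real.sqrt (θ₀ ^ 2 - θ₁ ^ 2 - θ₂ ^ 2)) /
        Real.sqrt (θ₀ ^ 2 - θ₁ ^ 2 - θ₂ ^ 2) := by
  have hθ' : θ₁ ^ 2 + θ₂ ^ 2 < θ₀ ^ 2 :=
    (sqrt_lt' ((sqrt_nonneg _).trans_lt hθ)).1 hθ
  have hθ₂ : |θ₂| < θ₀ := (abs_le_sqrt (by nlinarith)).trans_lt hθ
  have hθ₁ : |θ₁| < √(θ₀ ^ 2 - θ₂ ^ 2) := by
    rw [lt_sqrt (abs_nonneg _), sq_abs]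
    linarith
  set T := √(θ₀ ^ 2 - θ₁ ^ 2 - θ₂ ^ 2)
  have hT : 0 < T := sqrt_pos.2 (by linarith)
  have hlin : ∫⁻ x, ENNReal.ofReal (hyperboloidKernel θ₀ θ₁ θ₂ x) =
      ENNReal.ofReal (2 * π * exp (-T) / T) := by
    rw [lintegral_hyperboloidKernel_boost θ₁ hθ₂, lintegral_hyperboloidKernel_swap,
      lintegral_hyperboloidKernel_boost 0 hθ₁, sq_sqrt (by linarith [sq_nonneg θ₁]),
      sub_right_comm, lintegral_hyperboloidKernel_zero_zero hT]
  show ∫ x, hyperboloidKernel θ₀ θ₁ θ₂ x = _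
  rw [integral_eq_lintegral_of_nonneg_ae (ae_of_all _ (hyperboloidKernel_nonneg θ₀ θ₁ θ₂))
    (continuous_hyperboloidKernel θ₀ θ₁ θ₂).aestronglyMeasurable, hlin,
    ENNReal.toReal_ofReal (by positivity)]
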